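/- arXiv:2307.08010 — 4 statements merged into one kernel-verified Lean document; each statement's English description precedes it below -/
import Mathlib

section
/- Let m ∈ ℝ and σ, r > 0. Suppose a ∈ C^∞(ℝ^{2d}) satisfies: for every pair of multi-indices α, β there is C_{α,β} > 0 such that |∂_x^α ∂_ξ^β a(λx, λ^σ ξ)| ≤ C_{α,β} λ^{m − |α| − σ|β|} for all (x,ξ) ∈ ℝ^{2d} with |(x,ξ)| = r and all λ ≥ 1. Then a ∈ G^{m,σ}. -/
noncomputable section

open Real Filter MeasureTheory Set
open scoped BigOperators Topology

abbrev Rd (d : ℕ) := EuclideanSpace ℝ (Fin d)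

/-- Iterated directional derivative along a list of directions. -/
def iterDeriv {E F : Type*} [NormedAddCommGroup E] [NormedSpace ℝ E]
    [NormedAddCommGroup F] [NormedSpace ℝ F] : List E → (E → F) → E → F
  | [], a => a
  | v :: l, a => fun p => fderiv ℝ (iterDeriv l a) p v

/-- Directions in the `x` variables according to multi-index `α`. -/
def xDirs {d : ℕ} (α : Fin d → ℕ) : List (Rd d × Rd d) :=
  ((List.finRange d).map fun j =>
    List.replicate (α j) ((EuclideanSpace.single j (1:ℝ), (0 : Rd d)))).flatten

def xiDirs {d : ℕ} (β : Fin d → ℕ) : List (Rd d × Rd d) :=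
  ((List.finRange d).map fun j =>
    List.replicate (β j) (((0 : Rd d), EuclideanSpace.single j (1:ℝ)))).flatten

/-- The anisotropic weight `θ_σ`. -/
def theta (σ : ℝ) {d : ℕ} (p : Rd d × Rd d) : ℝ := 1 + ‖p.1‖ + ‖p.2‖ ^ (1/σ)

/-- The anisotropic Shubin symbol class `G^{m,σ}`. -/
def IsShubin {d : ℕ} (σ m : ℝ) (a : Rd d × Rd d → ℂ) : Prop :=
  ContDiff ℝ (⊤ : ℕ∞) a ∧
  ∀ α β : Fin d → ℕ, ∃ C > 0, ∀ x ξ : Rd d,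
    ‖iterDeriv (xDirs α ++ xiDirs β) a (x, ξ)‖ ≤
      C * theta σ (x, ξ) ^ (m - (∑ j, (α j : ℝ)) - σ * (∑ j, (β j : ℝ)))

lemma iterDeriv_contDiff {E F : Type*} [NormedAddCommGroup E] [NormedSpace ℝ E]
    [NormedAddCommGroup F] [NormedSpace ℝ F] (l : List E) (a : E → F)
    (ha : ContDiff ℝ (⊤ : ℕ∞) a) : ContDiff ℝ (⊤ : ℕ∞) (iterDeriv l a) := by
  induction l with
  | nil => exact ha
  | cons v l ih =>
    show ContDiff ℝ (⊤ : ℕ∞) fun p => fderiv ℝ (iterDeriv l a) p v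
    exact (ih.fderiv_right (by simp)).clm_apply contDiff_const

lemma exists_scaling (A B r σ : ℝ) (hσ : 0 < σ) (hr : 0 < r)
    (hcase : r^2 ≤ A^2 + B^2) :
    ∃ l : ℝ, 1 ≤ l ∧ A^2 / l ^ (2:ℝ) + B^2 / l ^ (2*σ) = r^2 := by
  set Λ : ℝ := max 1 (max ((2*A^2/r^2) ^ (2:ℝ)⁻¹) ((2*B^2/r^2) ^ (2*σ)⁻¹)) with hΛ
  have hΛ1 : 1 ≤ Λ := le_max_left _ _
  have hΛ0 : 0 < Λ := lt_of_lt_of_le one_pos hΛ1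
  set G : ℝ → ℝ := fun l => A^2 / l ^ (2:ℝ) + B^2 / l ^ (2*σ) with hG
  have hcont : ContinuousOn G (Icc 1 Λ) := by
    have hq : ∀ z : ℝ, ContinuousOn (fun l : ℝ => l ^ z) (Icc 1 Λ) := fun z l hl =>
      (Real.continuousAt_rpow_const l z
        (Or.inl (by intro h; rw [h] at hl; linarith [hl.1]))).continuousWithinAt
    refine ContinuousOn.add (ContinuousOn.div continuousOn_const (hq 2) ?_)
      (ContinuousOn.div continuousOn_const (hq (2*σ)) ?_) <;>
      exact fun l hl => ne_of_gt (Real.rpow_pos_of_pos (by linarith [hl.1]) _)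
  have hG1 : G 1 = A^2 + B^2 := by simp [hG]
  have hGΛ : G Λ ≤ r^2 := by
    have h1 : 2*A^2/r^2 ≤ Λ ^ (2:ℝ) := by
      calc 2*A^2/r^2 = ((2*A^2/r^2) ^ (2:ℝ)⁻¹) ^ (2:ℝ) :=
            (Real.rpow_inv_rpow (by positivity) two_ne_zero).symm
        _ ≤ Λ ^ (2:ℝ) := Real.rpow_le_rpow (by positivity)
            (le_trans (le_max_left _ _) (le_max_right _ _)) (by norm_num)
    have h2 : 2*B^2/r^2 ≤ Λ ^ (2*σ) := by
      calc 2*B^2/r^2 = ((2*B^2/r^2) ^ (2*σ)⁻¹) ^ (2*σ) :=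
            (Real.rpow_inv_rpow (by positivity) (by positivity)).symm
        _ ≤ Λ ^ (2*σ) := Real.rpow_le_rpow (by positivity)
            (le_trans (le_max_right _ _) (le_max_right _ _)) (by positivity)
    have p1 : 0 < Λ ^ (2:ℝ) := Real.rpow_pos_of_pos hΛ0 _
    have p2 : 0 < Λ ^ (2*σ) := Real.rpow_pos_of_pos hΛ0 _
    have q1 : A^2 / Λ ^ (2:ℝ) ≤ r^2/2 := by
      rw [div_le_div_iff₀ p1 (by norm_num)]
      rw [div_le_iff₀ (by positivity)] at h1
      nlinarith
    have q2 : B^2 / Λ ^ (2*σ) ≤ r^2/2 := by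
      rw [div_le_div_iff₀ p2 (by norm_num)]
      rw [div_le_iff₀ (by positivity)] at h2
      nlinarith
    simp only [hG]; linarith
  have : r^2 ∈ G '' Icc 1 Λ :=
    intermediate_value_Icc' hΛ1 hcont ⟨hGΛ, by rw [hG1]; exact hcase⟩
  obtain ⟨l, hl, hgl⟩ := this
  exact ⟨l, hl.1, hgl⟩


lemma aux_le_of_sq (u v r : ℝ) (hu : 0 ≤ u) (hr : 0 ≤ r) (h : u^2 + v^2 ≤ r^2) :
    u ≤ r := by nlinarith [sq_nonneg v]

lemma aux_sum_ge (u v r : ℝ) (hu : 0 ≤ u) (hv : 0 ≤ v) (hr : 0 ≤ r)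
    (h : u^2 + v^2 = r^2) : r ≤ u + v := by nlinarith [mul_nonneg hu hv]

theorem statement0 {d : ℕ} (σ r m : ℝ) (hσ : 0 < σ) (hr : 0 < r)
    (a : Rd d × Rd d → ℂ) (ha : ContDiff ℝ (⊤ : ℕ∞) a)
    (hbound : ∀ α β : Fin d → ℕ, ∃ C > 0, ∀ (x ξ : Rd d) (l : ℝ),
      Real.sqrt (‖x‖^2 + ‖ξ‖^2) = r → 1 ≤ l →
      ‖iterDeriv (xDirs α ++ xiDirs β) a (l • x, l ^ σ • ξ)‖ ≤
        C * l ^ (m - (∑ j, (α j : ℝ)) - σ * (∑ j, (β j : ℝ)))) :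
    IsShubin σ m a := by
  refine ⟨ha, fun α β => ?_⟩
  obtain ⟨C, hC, hC'⟩ := hbound α β
  set e : ℝ := m - (∑ j, (α j : ℝ)) - σ * (∑ j, (β j : ℝ)) with he
  set g : Rd d × Rd d → ℂ := iterDeriv (xDirs α ++ xiDirs β) a with hg
  have hgc : Continuous g := (iterDeriv_contDiff _ a ha).continuous
  obtain ⟨K, hK⟩ := (isCompact_closedBall (0 : Rd d × Rd d) r).exists_bound_of_continuousOn
    hgc.continuousOn
  have hK0 : 0 ≤ K := le_trans (norm_nonneg _) (hK 0 (Metric.mem_closedBall_self hr.le))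
  set M : ℝ := 1 + r + r ^ (1/σ) with hM
  have hM0 : 0 < M := by positivity
  set c : ℝ := min (r/2) ((r/2) ^ (1/σ)) with hc
  have hc0 : 0 < c := lt_min (by positivity) (by positivity)
  set D : ℝ := max (c⁻¹ ^ e) (M ^ (-e)) with hD
  have hD0 : 0 < D :=
    lt_of_lt_of_le (Real.rpow_pos_of_pos (inv_pos.mpr hc0) e) (le_max_left _ _)
  set m0 : ℝ := min 1 (M ^ e) with hm0
  have hm00 : 0 < m0 := lt_min one_pos (Real.rpow_pos_of_pos hM0 e)
  refine ⟨max (C*D) (K/m0), lt_of_lt_of_le (mul_pos hC hD0) (le_max_left _ _),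
    fun x ξ => ?_⟩
  have hθdef : theta σ (x, ξ) = 1 + ‖x‖ + ‖ξ‖ ^ (1/σ) := rfl
  have hθ1 : 1 ≤ theta σ (x, ξ) := by
    rw [hθdef]
    have h1 : (0:ℝ) ≤ ‖ξ‖ ^ (1/σ) := Real.rpow_nonneg (norm_nonneg _) _
    linarith [norm_nonneg x]
  have hθ0 : 0 < theta σ (x, ξ) := lt_of_lt_of_le one_pos hθ1
  have hθe : 0 ≤ theta σ (x, ξ) ^ e := (Real.rpow_pos_of_pos hθ0 e).le
  by_cases hcase : ‖x‖^2 + ‖ξ‖^2 ≤ r^2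
  · -- compact region
    have hx : ‖x‖ ≤ r := aux_le_of_sq _ ‖ξ‖ r (norm_nonneg x) hr.le hcase
    have hξ : ‖ξ‖ ≤ r := by
      refine aux_le_of_sq _ ‖x‖ r (norm_nonneg ξ) hr.le ?_
      linarith
    have hmem : (x, ξ) ∈ Metric.closedBall (0 : Rd d × Rd d) r := by
      rw [Metric.mem_closedBall, dist_zero_right, Prod.norm_def]
      exact max_le hx hξ
    have hθM : theta σ (x, ξ) ≤ M := by
      rw [hθdef, hM]
      have := Real.rpow_le_rpow (norm_nonneg ξ) hξ (by positivity : (0:ℝ) ≤ 1/σ)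
      linarith
    have hm0θ : m0 ≤ theta σ (x, ξ) ^ e := by
      rcases le_or_gt 0 e with h | h
      · calc m0 ≤ 1 := min_le_left _ _
          _ = (1:ℝ) ^ e := (Real.one_rpow e).symm
          _ ≤ _ := Real.rpow_le_rpow (by norm_num) hθ1 h
      · calc m0 ≤ M ^ e := min_le_right _ _
          _ ≤ _ := Real.rpow_le_rpow_of_nonpos hθ0 hθM h.le
    calc ‖g (x, ξ)‖ ≤ K := hK _ hmem
      _ = (K / m0) * m0 := by field_simp
      _ ≤ max (C*D) (K/m0) * theta σ (x, ξ) ^ e :=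
          mul_le_mul (le_max_right _ _) hm0θ hm00.le
            (le_trans (div_nonneg hK0 hm00.le) (le_max_right _ _))
  · -- large region
    push_neg at hcase
    obtain ⟨l, hl1, hgl⟩ := exists_scaling ‖x‖ ‖ξ‖ r σ hσ hr hcase.le
    have hl0 : 0 < l := lt_of_lt_of_le one_pos hl1
    have hlσ : 0 < l ^ σ := Real.rpow_pos_of_pos hl0 _
    set y : Rd d := l⁻¹ • x with hy
    set η : Rd d := (l ^ σ)⁻¹ • ξ with hη
    have hyn : ‖y‖ = ‖x‖ / l := by
      rw [hy, norm_smul, norm_inv, Real.norm_eq_abs, abs_of_pos hl0, inv_mul_eq_div]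
    have hηn : ‖η‖ = ‖ξ‖ / l ^ σ := by
      rw [hη, norm_smul, norm_inv, Real.norm_eq_abs, abs_of_pos hlσ, inv_mul_eq_div]
    have e1 : l ^ (2:ℝ) = l ^ (2:ℕ) := by
      rw [← Real.rpow_natCast l 2]; norm_num
    have e2 : l ^ (2*σ) = (l ^ σ) ^ (2:ℕ) := by
      rw [← Real.rpow_natCast (l ^ σ) 2, ← Real.rpow_mul hl0.le]; ring_nf
    have hsq : ‖y‖^2 + ‖η‖^2 = r^2 := by
      rw [hyn, hηn, div_pow, div_pow]
      rw [e1, e2] at hgl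
      exact hgl
    have hsqrt : Real.sqrt (‖y‖^2 + ‖η‖^2) = r := by rw [hsq]; exact Real.sqrt_sq hr.le
    have key := hC' y η l hsqrt hl1
    have hx' : l • y = x := smul_inv_smul₀ hl0.ne' x
    have hξ' : l ^ σ • η = ξ := smul_inv_smul₀ hlσ.ne' ξ
    rw [hx', hξ'] at key
    -- norms of x, ξ in terms of y, η
    have hAx : ‖x‖ = l * ‖y‖ := by
      rw [← hx', norm_smul, Real.norm_eq_abs, abs_of_pos hl0]
    have hBξ : ‖ξ‖ = l ^ σ * ‖η‖ := by
      rw [← hξ', norm_smul, Real.norm_eq_abs, abs_of_pos hlσ]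
    have hξr : ‖ξ‖ ^ (1/σ) = l * ‖η‖ ^ (1/σ) := by
      rw [hBξ, Real.mul_rpow hlσ.le (norm_nonneg η), ← Real.rpow_mul hl0.le,
        mul_one_div_cancel hσ.ne', Real.rpow_one]
    set s : ℝ := ‖y‖ + ‖η‖ ^ (1/σ) with hs
    have hθ : theta σ (x, ξ) = 1 + l * s := by
      rw [hθdef, hAx, hξr, hs]; ring
    have hsnn : 0 ≤ s := add_nonneg (norm_nonneg _) (Real.rpow_nonneg (norm_nonneg _) _)
    have hsum : r ≤ ‖y‖ + ‖η‖ :=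
      aux_sum_ge _ _ _ (norm_nonneg y) (norm_nonneg η) hr.le hsq
    have hsl : c ≤ s := by
      rcases le_or_gt (r/2) ‖y‖ with h | h
      · refine le_trans (min_le_left _ _) (le_trans h ?_)
        exact le_add_of_nonneg_right (Real.rpow_nonneg (norm_nonneg _) _)
      · have hη2 : r/2 ≤ ‖η‖ := by linarith
        refine le_trans (min_le_right _ _) ?_
        calc (r/2) ^ (1/σ) ≤ ‖η‖ ^ (1/σ) :=
              Real.rpow_le_rpow (by positivity) hη2 (by positivity)
          _ ≤ s := le_add_of_nonneg_left (norm_nonneg _)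
    have hyr : ‖y‖ ≤ r := aux_le_of_sq _ ‖η‖ r (norm_nonneg y) hr.le hsq.le
    have hηr : ‖η‖ ≤ r := by
      refine aux_le_of_sq _ ‖y‖ r (norm_nonneg η) hr.le ?_
      linarith [hsq]
    have hsu : s ≤ r + r ^ (1/σ) :=
      add_le_add hyr (Real.rpow_le_rpow (norm_nonneg η) hηr (by positivity))
    have hθlow : l * c ≤ theta σ (x, ξ) := by
      rw [hθ]
      have h1 := mul_le_mul_of_nonneg_left hsl hl0.le
      linarith
    have hθup : theta σ (x, ξ) ≤ l * M := by
      rw [hθ, hM]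
      have h1 := mul_le_mul_of_nonneg_left hsu hl0.le
      have h2 : l * (1 + r + r ^ (1/σ)) = l + l * (r + r ^ (1/σ)) := by ring
      linarith
    have hle : l ^ e ≤ D * theta σ (x, ξ) ^ e := by
      rcases le_or_gt 0 e with h | h
      · have hlθ : l ≤ theta σ (x, ξ) * c⁻¹ := by
          rw [← div_eq_mul_inv, le_div_iff₀ hc0]; exact hθlow
        calc l ^ e ≤ (theta σ (x, ξ) * c⁻¹) ^ e := Real.rpow_le_rpow hl0.le hlθ h
          _ = theta σ (x, ξ) ^ e * (c⁻¹) ^ e :=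
              Real.mul_rpow hθ0.le (inv_nonneg.mpr hc0.le)
          _ ≤ D * theta σ (x, ξ) ^ e := by
              rw [mul_comm]
              exact mul_le_mul_of_nonneg_right (le_max_left _ _) hθe
      · have hlθ : theta σ (x, ξ) * M⁻¹ ≤ l := by
          rw [← div_eq_mul_inv, div_le_iff₀ hM0]; exact hθup
        have h0 : 0 < theta σ (x, ξ) * M⁻¹ := by positivity
        calc l ^ e ≤ (theta σ (x, ξ) * M⁻¹) ^ e :=
              Real.rpow_le_rpow_of_nonpos h0 hlθ h.le
          _ = theta σ (x, ξ) ^ e * (M⁻¹) ^ e :=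
              Real.mul_rpow hθ0.le (inv_nonneg.mpr hM0.le)
          _ = theta σ (x, ξ) ^ e * M ^ (-e) := by
              rw [Real.inv_rpow hM0.le, ← Real.rpow_neg hM0.le]
          _ ≤ D * theta σ (x, ξ) ^ e := by
              rw [mul_comm]
              exact mul_le_mul_of_nonneg_right (le_max_right _ _) hθe
    calc ‖g (x, ξ)‖ ≤ C * l ^ e := key
      _ ≤ C * (D * theta σ (x, ξ) ^ e) := mul_le_mul_of_nonneg_left hle hC.le
      _ = (C * D) * theta σ (x, ξ) ^ e := by ring
      _ ≤ max (C*D) (K/m0) * theta σ (x, ξ) ^ e :=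
          mul_le_mul_of_nonneg_right (le_max_left _ _) hθe
end
end

section
/- If σ > 0, m ≥ 0 and a ∈ C^∞(ℝ^{2d}) satisfies the anisotropic homogeneity a(λx, λ^σ ξ) = λ^m a(x,ξ) for all (x,ξ) ∈ ℝ^{2d} \ {0} and all λ > 0, then a ∈ G^{m,σ}. -/
noncomputable section

open Real Filter MeasureTheory Set
open scoped BigOperators Topology

/-! Derivatives along the `x`-directions lower the degree of an anisotropically homogeneous
function by `1`, those along the `ξ`-directions by `σ`. Rescaling a point `p ≠ 0` by
`θ_σ(p)⁻¹` lands in the unit ball, where the continuous derivative is bounded, and undoing the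
rescaling produces the factor `θ_σ(p)` raised to the lowered degree. -/

section iterDeriv

variable {E F : Type*} [NormedAddCommGroup E] [NormedSpace ℝ E]
  [NormedAddCommGroup F] [NormedSpace ℝ F]

theorem iterDeriv_append (L₁ L₂ : List E) (g : E → F) :
    iterDeriv (L₁ ++ L₂) g = iterDeriv L₁ (iterDeriv L₂ g) := by
  induction L₁ with
  | nil => rfl
  | cons v L₁ ih => funext p; simp only [List.cons_append, iterDeriv, ih]

theorem ContDiff.iterDeriv (L : List E) {g : E → F} (hg : ContDiff ℝ (⊤ : ℕ∞) g) :
    ContDiff ℝ (⊤ : ℕ∞) (iterDeriv L g) := by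
  induction L with
  | nil => exact hg
  | cons v L ih =>
    exact (ContinuousLinearMap.apply ℝ F v).contDiff.comp
      (ih.fderiv_right (by exact_mod_cast le_top))

theorem fderiv_apply_map_of_eq_smul {S : E →L[ℝ] E} {U : Set E} (hU : IsOpen U) {c : ℝ}
    {g : E → F} (hg : Differentiable ℝ g) (hgS : ∀ p ∈ U, g (S p) = c • g p)
    {v : E} {t : ℝ} (ht : t ≠ 0) (hv : S v = t • v) :
    ∀ p ∈ U, fderiv ℝ g (S p) v = (c / t) • fderiv ℝ g p v := by
  intro p hp
  have hev : g ∘ S =ᶠ[𝓝 p] fun q => c • g q := eventuallyEq_of_mem (hU.mem_nhds hp) hgS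
  have hcomp : fderiv ℝ (g ∘ S) p = c • fderiv ℝ g p := by
    rw [hev.fderiv_eq, fderiv_fun_const_smul (hg p)]
  have hchain : fderiv ℝ (g ∘ S) p v = t • fderiv ℝ g (S p) v := by
    rw [fderiv_comp p (hg _) S.differentiableAt, S.fderiv]
    simp [hv]
  have key : t • fderiv ℝ g (S p) v = c • fderiv ℝ g p v := by
    simpa [hcomp] using hchain.symm
  rw [div_eq_inv_mul, ← smul_smul, ← key, smul_smul, inv_mul_cancel₀ ht, one_smul]

theorem iterDeriv_map_of_eq_smul {S : E →L[ℝ] E} {U : Set E} (hU : IsOpen U) {c : ℝ}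
    {g : E → F} (hg : ContDiff ℝ (⊤ : ℕ∞) g) (hgS : ∀ p ∈ U, g (S p) = c • g p)
    {L : List E} {t : ℝ} (ht : t ≠ 0) (hL : ∀ v ∈ L, S v = t • v) :
    ∀ p ∈ U, iterDeriv L g (S p) = (c / t ^ L.length) • iterDeriv L g p := by
  induction L with
  | nil => simpa [iterDeriv] using hgS
  | cons v L ih =>
    intro p hp
    have hstep := fderiv_apply_map_of_eq_smul hU ((hg.iterDeriv L).differentiable (by simp))
      (ih fun w hw => hL w (List.mem_cons_of_mem v hw)) ht (hL v List.mem_cons_self) p hp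
    simp only [iterDeriv]
    rw [hstep, List.length_cons, pow_succ, div_div]

end iterDeriv

section anisoDilation

variable {E F : Type*} [NormedAddCommGroup E] [NormedSpace ℝ E]
  [NormedAddCommGroup F] [NormedSpace ℝ F]

def anisoDilation (σ l : ℝ) : E × F →L[ℝ] E × F :=
  (l • ContinuousLinearMap.id ℝ E).prodMap (l ^ σ • ContinuousLinearMap.id ℝ F)

@[simp]
theorem anisoDilation_apply (σ l : ℝ) (p : E × F) :
    anisoDilation σ l p = (l • p.1, l ^ σ • p.2) := rfl

theorem anisoDilation_inl (σ l : ℝ) (v : E) :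
    anisoDilation σ l ((v, 0) : E × F) = l • (v, 0) := by
  simp

theorem anisoDilation_inr (σ l : ℝ) (w : F) :
    anisoDilation σ l ((0, w) : E × F) = l ^ σ • (0, w) := by
  simp

theorem anisoDilation_anisoDilation_inv {l : ℝ} (σ : ℝ) (hl : 0 < l) (p : E × F) :
    anisoDilation σ l (anisoDilation σ l⁻¹ p) = p := by
  have hlσ : l ^ σ ≠ 0 := (rpow_pos_of_pos hl σ).ne'
  simp [smul_smul, inv_rpow hl.le, hl.ne', hlσ]

end anisoDilation

theorem Real.rpow_div_rpow_pow {l : ℝ} (hl : 0 < l) (μ w : ℝ) (n : ℕ) :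
    l ^ μ / (l ^ w) ^ n = l ^ (μ - w * n) := by
  rw [rpow_sub hl, rpow_mul_natCast hl.le]

theorem length_xDirs {d : ℕ} (α : Fin d → ℕ) : (xDirs α).length = ∑ j, α j := by
  simp [xDirs, List.length_flatten, List.map_map, Function.comp_def, Fin.sum_univ_def]

theorem length_xiDirs {d : ℕ} (β : Fin d → ℕ) : (xiDirs β).length = ∑ j, β j := by
  simp [xiDirs, List.length_flatten, List.map_map, Function.comp_def, Fin.sum_univ_def]

theorem anisoDilation_of_mem_xDirs {d : ℕ} (σ l : ℝ) {α : Fin d → ℕ} :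
    ∀ v ∈ xDirs α, anisoDilation σ l v = l • v := by
  simp only [xDirs, List.mem_flatten, List.mem_map]
  rintro v ⟨_, ⟨j, _, rfl⟩, hv⟩
  rw [List.eq_of_mem_replicate hv, anisoDilation_inl]

theorem anisoDilation_of_mem_xiDirs {d : ℕ} (σ l : ℝ) {β : Fin d → ℕ} :
    ∀ v ∈ xiDirs β, anisoDilation σ l v = l ^ σ • v := by
  simp only [xiDirs, List.mem_flatten, List.mem_map]
  rintro v ⟨_, ⟨j, _, rfl⟩, hv⟩
  rw [List.eq_of_mem_replicate hv, anisoDilation_inr]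

theorem iterDeriv_xDirs_append_xiDirs_anisoDilation {d : ℕ} {σ μ : ℝ} {F : Type*}
    [NormedAddCommGroup F] [NormedSpace ℝ F] {g : Rd d × Rd d → F}
    (hg : ContDiff ℝ (⊤ : ℕ∞) g)
    (hhom : ∀ p ≠ 0, ∀ l : ℝ, 0 < l → g (anisoDilation σ l p) = l ^ μ • g p)
    (α β : Fin d → ℕ) (p : Rd d × Rd d) (hp : p ≠ 0) {l : ℝ} (hl : 0 < l) :
    iterDeriv (xDirs α ++ xiDirs β) g (anisoDilation σ l p) =
      l ^ (μ - (∑ j, (α j : ℝ)) - σ * (∑ j, (β j : ℝ))) •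
        iterDeriv (xDirs α ++ xiDirs β) g p := by
  have hξ := iterDeriv_map_of_eq_smul isOpen_compl_singleton hg (fun p hp => hhom p hp l hl)
    (rpow_pos_of_pos hl σ).ne' (anisoDilation_of_mem_xiDirs σ l (β := β))
  rw [rpow_div_rpow_pow hl] at hξ
  have hx := iterDeriv_map_of_eq_smul isOpen_compl_singleton (hg.iterDeriv _) hξ hl.ne'
    (anisoDilation_of_mem_xDirs σ l (α := α))
  rw [← rpow_natCast, ← rpow_sub hl, length_xDirs, length_xiDirs] at hx
  rw [iterDeriv_append, hx p hp]
  push_cast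
  ring_nf

section theta

variable {d : ℕ} {σ : ℝ}

theorem one_le_theta (p : Rd d × Rd d) : 1 ≤ theta σ p := by
  unfold theta
  have := rpow_nonneg (norm_nonneg p.2) (1 / σ)
  linarith [norm_nonneg p.1]

theorem theta_zero (hσ : σ ≠ 0) : theta σ (0 : Rd d × Rd d) = 1 := by
  simp [theta, hσ]

theorem norm_fst_le_theta (p : Rd d × Rd d) : ‖p.1‖ ≤ theta σ p := by
  unfold theta
  linarith [rpow_nonneg (norm_nonneg p.2) (1 / σ)]

theorem norm_snd_le_theta_rpow (hσ : 0 < σ) (p : Rd d × Rd d) : ‖p.2‖ ≤ theta σ p ^ σ := by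
  have h : ‖p.2‖ ^ (1 / σ) ≤ theta σ p := by
    unfold theta
    linarith [norm_nonneg p.1]
  calc ‖p.2‖ = (‖p.2‖ ^ (1 / σ)) ^ σ := by
        rw [← rpow_mul (norm_nonneg _), one_div_mul_cancel hσ.ne', rpow_one]
    _ ≤ theta σ p ^ σ := rpow_le_rpow (rpow_nonneg (norm_nonneg _) _) h hσ.le

theorem norm_anisoDilation_inv_theta_le_one (hσ : 0 < σ) (p : Rd d × Rd d) :
    ‖anisoDilation σ (theta σ p)⁻¹ p‖ ≤ 1 := by
  have hθ : 0 < theta σ p := one_pos.trans_le (one_le_theta p)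
  have hθσ : 0 < theta σ p ^ σ := rpow_pos_of_pos hθ σ
  rw [anisoDilation_apply, Prod.norm_mk, inv_rpow hθ.le]
  refine max_le ?_ ?_ <;>
    rw [norm_smul, norm_inv, Real.norm_of_nonneg (by positivity), inv_mul_le_one₀ (by positivity)]
  exacts [norm_fst_le_theta p, norm_snd_le_theta_rpow hσ p]

end theta

theorem exists_bound_theta_rpow_of_anisoDilation {d : ℕ} {σ μ : ℝ} (hσ : 0 < σ)
    {F : Type*} [NormedAddCommGroup F] [NormedSpace ℝ F] {K : Rd d × Rd d → F}
    (hK : Continuous K)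
    (hhom : ∀ p ≠ 0, ∀ l : ℝ, 0 < l → K (anisoDilation σ l p) = l ^ μ • K p) :
    ∃ C > 0, ∀ p, ‖K p‖ ≤ C * theta σ p ^ μ := by
  obtain ⟨C₀, hC₀⟩ :=
    (isCompact_closedBall (0 : Rd d × Rd d) 1).exists_bound_of_continuousOn hK.continuousOn
  refine ⟨max C₀ 1, by positivity, fun p => ?_⟩
  rcases eq_or_ne p 0 with rfl | hp
  · rw [theta_zero hσ.ne', one_rpow, mul_one]
    exact (hC₀ 0 (Metric.mem_closedBall_self zero_le_one)).trans (le_max_left _ _)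
  set l := theta σ p
  have hl : 0 < l := one_pos.trans_le (one_le_theta p)
  set q := anisoDilation σ l⁻¹ p
  have hqp : anisoDilation σ l q = p := anisoDilation_anisoDilation_inv σ hl p
  have hq : q ≠ 0 := by
    rintro hq
    rw [hq, map_zero] at hqp
    exact hp hqp.symm
  have hq_ball : q ∈ Metric.closedBall 0 1 := by
    rw [mem_closedBall_zero_iff]
    exact norm_anisoDilation_inv_theta_le_one hσ p
  calc ‖K p‖ = l ^ μ * ‖K q‖ := by
        rw [← hqp, hhom q hq l hl, norm_smul,
          Real.norm_of_nonneg (by positivity)]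
    _ ≤ l ^ μ * max C₀ 1 := by gcongr; exact (hC₀ q hq_ball).trans (le_max_left _ _)
    _ = max C₀ 1 * l ^ μ := mul_comm _ _

theorem statement1_general {d : ℕ} (σ m : ℝ) (hσ : 0 < σ)
    (a : Rd d × Rd d → ℂ) (ha : ContDiff ℝ (⊤ : ℕ∞) a)
    (hhom : ∀ p : Rd d × Rd d, p ≠ 0 → ∀ l : ℝ, 0 < l →
      a (l • p.1, l ^ σ • p.2) = ((l ^ m : ℝ) : ℂ) * a p) :
    IsShubin σ m a := by
  have ha_hom : ∀ p ≠ 0, ∀ l : ℝ, 0 < l → a (anisoDilation σ l p) = l ^ m • a p :=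
    fun p hp l hl => by rw [anisoDilation_apply, hhom p hp l hl, Complex.real_smul]
  refine ⟨ha, fun α β => ?_⟩
  obtain ⟨C, hC, hbound⟩ := exists_bound_theta_rpow_of_anisoDilation hσ
    (ha.iterDeriv (xDirs α ++ xiDirs β)).continuous
    fun p hp l hl => iterDeriv_xDirs_append_xiDirs_anisoDilation ha ha_hom α β p hp hl
  exact ⟨C, hC, fun x ξ => hbound (x, ξ)⟩

/-- If `a ∈ C^∞(ℝ^{2d})` is anisotropically homogeneous of degree `m ≥ 0`,
i.e. `a(λx, λ^σ ξ) = λ^m a(x,ξ)` for `(x,ξ) ≠ 0` and `λ > 0`, then `a ∈ G^{m,σ}`. -/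
theorem statement1 {d : ℕ} (σ m : ℝ) (hσ : 0 < σ) (hm : 0 ≤ m)
    (a : Rd d × Rd d → ℂ) (ha : ContDiff ℝ (⊤ : ℕ∞) a)
    (hhom : ∀ p : Rd d × Rd d, p ≠ 0 → ∀ l : ℝ, 0 < l →
      a (l • p.1, l ^ σ • p.2) = ((l ^ m : ℝ) : ℂ) * a p) :
    IsShubin σ m a :=
  statement1_general σ m hσ a ha hhom
end
end

section
/- If u₀ ∈ 𝒮(ℝ^d), then the function u(t,x) = (𝒦_t u₀)(x) satisfies: u(t,·) ∈ 𝒮(ℝ^d) for each t ∈ ℝ, t ↦ u(t,x) is differentiable for each x ∈ ℝ^d, ∂_t u(t,x) + i ( p(D)u(t,·)(x) + ⟨v,x⟩ u(t,x) ) = 0 for all (t,x) ∈ ℝ × ℝ^d, and u(0,·) = u₀, where p(D)f = ℱ^{−1}(p · ℱ f). -/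
noncomputable section

open Real Filter MeasureTheory Set SchwartzMap
open scoped BigOperators Topology InnerProductSpace ComplexConjugate

/-- Tempered distributions on `ℝ^d`, represented as continuous linear functionals on
the Schwartz space; the (conjugate-linear in the second argument) pairing of the paper
is `(u, ψ) = u (conj ψ)`. -/
abbrev TD (d : ℕ) := SchwartzMap (Rd d) ℂ →L[ℂ] ℂ

/-- The Fourier transform `ℱf(ξ) = (2π)^{-d/2} ∫ f(x) e^{-i⟨x,ξ⟩} dx`. -/
def FT {d : ℕ} (f : Rd d → ℂ) (ξ : Rd d) : ℂ :=
  (((2 * Real.pi) ^ (-(d : ℝ) / 2) : ℝ) : ℂ) *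
    ∫ x : Rd d, f x * Complex.exp (-Complex.I * ((⟪x, ξ⟫_ℝ : ℝ) : ℂ))

/-- The inverse Fourier transform `ℱ^{-1}f(x) = (2π)^{-d/2} ∫ f(ξ) e^{i⟨x,ξ⟩} dξ`. -/
def FTinv {d : ℕ} (f : Rd d → ℂ) (x : Rd d) : ℂ :=
  (((2 * Real.pi) ^ (-(d : ℝ) / 2) : ℝ) : ℂ) *
    ∫ ξ : Rd d, f ξ * Complex.exp (Complex.I * ((⟪x, ξ⟫_ℝ : ℝ) : ℂ))

/-- The phase `φ_t(ξ) = Σ_j v_j⁻¹ (q_j(ξ_j − t v_j) − q_j(ξ_j))`. -/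
def phase {d : ℕ} (Q : Fin d → Polynomial ℝ) (v : Rd d) (t : ℝ) (ξ : Rd d) : ℝ :=
  ∑ j : Fin d, (v j)⁻¹ * ((Q j).eval (ξ j - t * v j) - (Q j).eval (ξ j))

/-- The gradient of the principal part `P_m(ξ) = Σ_j c_{j,m} ξ_j^m`,
where `c_{j,m} = coeff m (p_j)` (which vanishes unless `deg p_j = m`). -/
def gradPm {d : ℕ} (p : Fin d → Polynomial ℝ) (m : ℕ) (ξ : Rd d) : Rd d :=
  (EuclideanSpace.equiv (Fin d) ℝ).symm
    (fun j => (m : ℝ) * ((p j).coeff m) * ξ j ^ (m - 1))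

/-- The anisotropic Gabor wave front set `WF_g^σ(u)` of a tempered distribution `u`,
with respect to a window `g`; `Cj` is complex conjugation on Schwartz functions and
`MT x ξ` is the modulation-translation operator `M_ξ T_x`.  A nonzero point `z` is
*not* in the wave front set iff there is an open set `U ∋ z` on which
`sup λ^N |V_g u(λx, λ^σ ξ)| < ∞` for every `N ≥ 0`. -/
def WFset {d : ℕ} (σ : ℝ) (g : SchwartzMap (Rd d) ℂ)
    (Cj : SchwartzMap (Rd d) ℂ → SchwartzMap (Rd d) ℂ)
    (MT : Rd d → Rd d → SchwartzMap (Rd d) ℂ → SchwartzMap (Rd d) ℂ)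
    (u : TD d) : Set (Rd d × Rd d) :=
  {z | z ≠ 0 ∧ ¬ ∃ U : Set (Rd d × Rd d), IsOpen U ∧ z ∈ U ∧
    ∀ N : ℝ, 0 ≤ N → ∃ B : ℝ, ∀ w ∈ U, ∀ l : ℝ, 0 < l →
      l ^ N * ((2 * Real.pi) ^ (-(d : ℝ) / 2) *
        ‖u (Cj (MT (l • w.1) (l ^ σ • w.2) g))‖) ≤ B}


/-!
Write `u(t,x) = e^{-it⟨x,v⟩} ℱ⁻¹(e^{iφ_t} ℱu₀)(x)`. Since `∂_t φ_t(ξ) = -p(ξ - tv)` and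
`|p(ξ - tv)|` grows polynomially in `ξ` locally uniformly in `t`, the Schwartz decay of `ℱu₀`
lets us differentiate under the integral; the product rule then yields
`∂_t u = -i⟨x,v⟩u - i e^{-it⟨x,v⟩} ℱ⁻¹(p(· - tv) e^{iφ_t} ℱu₀)`. By Fourier inversion the
modulation `M_{-tv}` becomes a translation on the Fourier side,
`ℱu(t)(ξ) = e^{iφ_t(ξ+tv)} ℱu₀(ξ+tv)`, so the last term is exactly `-i p(D)u(t)`. At `t = 0`
the phase vanishes and Fourier inversion returns `u₀`.
-/

open Complex Polynomial FourierTransform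

section

variable {d : ℕ}

/- Rescaling the input of `FT` but the output of `FTinv` reduces both inversion formulas
to Mathlib's for `𝓕`, whose kernel is `e^{-2πi⟨x,ξ⟩}`. -/
lemma FT_eq_fourier_comp_smul (f : Rd d → ℂ) (ξ : Rd d) :
    FT f ξ = (((2 * π) ^ (-(d : ℝ) / 2) * (2 * π) ^ d : ℝ) : ℂ) *
      𝓕 (fun x => f ((2 * π) • x)) ξ := by
  have hscale : 𝓕 (fun x => f ((2 * π) • x)) ξ
      = (((2 * π) ^ d)⁻¹ : ℝ) * ∫ y : Rd d, f y * cexp (-I * ⟪y, ξ⟫_ℝ) := by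
    have := Measure.integral_comp_smul volume
      (fun y : Rd d => f y * cexp (-I * ⟪y, ξ⟫_ℝ)) (2 * π)
    rw [finrank_euclideanSpace_fin, abs_of_pos (by positivity), Complex.real_smul] at this
    rw [Real.fourier_eq', ← this]
    congr 1
    ext x
    rw [real_inner_smul_left, smul_eq_mul]
    push_cast
    ring_nf
  rw [hscale, FT, ← mul_assoc, ← ofReal_mul, mul_assoc ((2 * π) ^ (-(d : ℝ) / 2) : ℝ),
    mul_inv_cancel₀ (by positivity), mul_one]

lemma FTinv_smul_eq_fourierInv (g : Rd d → ℂ) (x : Rd d) :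
    FTinv g ((2 * π) • x) = (((2 * π) ^ (-(d : ℝ) / 2) : ℝ) : ℂ) * 𝓕⁻ g x := by
  rw [FTinv, Real.fourierInv_eq']
  congr 2
  ext ξ
  rw [real_inner_smul_left, real_inner_comm, smul_eq_mul]
  push_cast
  ring_nf

lemma FT_normalization :
    (((2 * π) ^ (-(d : ℝ) / 2) : ℝ) : ℂ) * (((2 * π) ^ (-(d : ℝ) / 2) * (2 * π) ^ d : ℝ) : ℂ)
      = 1 := by
  have h2π : (0 : ℝ) < 2 * π := by positivity
  rw [← ofReal_mul, ← mul_assoc, ← Real.rpow_natCast, ← Real.rpow_add h2π,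
    ← Real.rpow_add h2π]
  norm_num

def schwartzFT (f : 𝓢(Rd d, ℂ)) : 𝓢(Rd d, ℂ) :=
  (((2 * π) ^ (-(d : ℝ) / 2) * (2 * π) ^ d : ℝ) : ℂ) •
    𝓕 (compCLMOfContinuousLinearEquiv ℂ
      (ContinuousLinearEquiv.smulLeft (Units.mk0 (2 * π) (by positivity))) f)

lemma coe_schwartzFT (f : 𝓢(Rd d, ℂ)) : ⇑(schwartzFT f) = FT f := by
  ext ξ
  rw [FT_eq_fourier_comp_smul, schwartzFT, smul_apply, fourier_coe, smul_eq_mul]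
  rfl

@[fun_prop]
lemma continuous_FT (f : 𝓢(Rd d, ℂ)) : Continuous (FT f) :=
  coe_schwartzFT f ▸ (schwartzFT f).continuous

lemma integrable_FT (f : 𝓢(Rd d, ℂ)) : Integrable (FT f) :=
  coe_schwartzFT f ▸ (schwartzFT f).integrable

lemma FTinv_FT (f : 𝓢(Rd d, ℂ)) : FTinv (FT f) = f := by
  ext x
  obtain ⟨y, rfl⟩ : ∃ y, (2 * π) • y = x :=
    ⟨(2 * π)⁻¹ • x, smul_inv_smul₀ (by positivity) x⟩
  rw [FTinv_smul_eq_fourierInv, ← coe_schwartzFT, ← fourierInv_coe, schwartzFT,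
    fourierInv_smul, FourierPair.fourierInv_fourier_eq, smul_apply, smul_eq_mul,
    ← mul_assoc, FT_normalization, one_mul]
  rfl

lemma FT_FTinv {g : Rd d → ℂ} (hc : Continuous g) (hg : Integrable g)
    (hinv : Integrable (FTinv g)) : FT (FTinv g) = g := by
  set C : ℂ := (((2 * π) ^ (-(d : ℝ) / 2) : ℝ) : ℂ)
  have hC : C ≠ 0 := ofReal_ne_zero.mpr (by positivity)
  have hF : Integrable (𝓕 g) := by
    refine (((hinv.comp_smul (R := 2 * π) (by positivity)).comp_neg).const_mul C⁻¹).congr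
      (.of_forall fun ξ => ?_)
    dsimp only
    rw [FTinv_smul_eq_fourierInv, inv_mul_cancel_left₀ hC, Real.fourierInv_eq_fourier_neg,
      neg_neg]
  have hscaled : (fun x => FTinv g ((2 * π) • x)) = C • 𝓕⁻ g := by
    ext x
    rw [FTinv_smul_eq_fourierInv, Pi.smul_apply, smul_eq_mul]
  ext ξ
  simp only [FT_eq_fourier_comp_smul, hscaled, Real.fourier_eq, Pi.smul_apply, smul_comm _ C,
    integral_smul]
  rw [← Real.fourier_eq, hc.fourier_fourierInv_eq hg hF, smul_eq_mul, ← mul_assoc,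
    mul_comm _ C, FT_normalization, one_mul]

lemma FT_cexp_neg_inner_mul (g : Rd d → ℂ) (w ξ : Rd d) :
    FT (fun x => cexp (-I * ⟪x, w⟫_ℝ) * g x) ξ = FT g (ξ + w) := by
  simp only [FT, inner_add_right, ofReal_add, mul_add, neg_mul, Complex.exp_add]
  congr 2
  ext x
  ring

lemma FTinv_comp_add_right (g : Rd d → ℂ) (w x : Rd d) :
    FTinv (fun ξ => g (ξ + w)) x = cexp (-I * ⟪x, w⟫_ℝ) * FTinv g x := by
  have hshift := integral_add_right_eq_self (μ := volume)
    (fun η : Rd d => g η * cexp (I * ⟪x, η - w⟫_ℝ)) w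
  simp only [add_sub_cancel_right] at hshift
  have hsplit : ∀ η : Rd d, g η * cexp (I * ⟪x, η - w⟫_ℝ)
      = cexp (-I * ⟪x, w⟫_ℝ) * (g η * cexp (I * ⟪x, η⟫_ℝ)) := fun η => by
    rw [inner_sub_right, ofReal_sub, mul_sub, sub_eq_neg_add, ← neg_mul, Complex.exp_add]
    ring
  simp only [FTinv, hshift, hsplit, integral_const_mul]
  ring

lemma hasDerivAt_integral_cexp_mul {α : Type*} [MeasurableSpace α] {μ : Measure α}
    {φ φ' : ℝ → α → ℝ} {g : α → ℂ} {B : α → ℝ} {t : ℝ} {S : Set ℝ} (hS : S ∈ 𝓝 t)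
    (hφ : ∀ s, Measurable (φ s)) (hφ' : Measurable (φ' t)) (hg : Integrable g μ)
    (hBg : Integrable (fun a => B a * ‖g a‖) μ) (hderiv : ∀ a s, HasDerivAt (φ · a) (φ' s a) s)
    (hbound : ∀ a, ∀ s ∈ S, |φ' s a| ≤ B a) :
    HasDerivAt (fun s => ∫ a, cexp (I * φ s a) * g a ∂μ)
      (∫ a, I * φ' t a * cexp (I * φ t a) * g a ∂μ) t := by
  have hmeas : ∀ s, AEStronglyMeasurable (fun a => cexp (I * φ s a) * g a) μ := fun s =>
    ((measurable_ofReal.comp (hφ s)).const_mul I).cexp.aestronglyMeasurable.mul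
      hg.aestronglyMeasurable
  refine (hasDerivAt_integral_of_dominated_loc_of_deriv_le (bound := fun a => B a * ‖g a‖)
    (F' := fun s a => I * φ' s a * cexp (I * φ s a) * g a) hS (.of_forall hmeas)
    (hg.norm.mono' (hmeas t) (.of_forall fun a => ?_)) ?_ (.of_forall fun a s hs => ?_) hBg
    (.of_forall fun a s _ => ?_)).2
  · rw [norm_mul, norm_exp_I_mul_ofReal, one_mul]
  · exact (((measurable_ofReal.comp hφ').const_mul I).mul
      ((measurable_ofReal.comp (hφ t)).const_mul I).cexp).aestronglyMeasurable.mul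
      hg.aestronglyMeasurable
  · rw [norm_mul, norm_mul, norm_mul, norm_I, one_mul, norm_real, Real.norm_eq_abs,
      norm_exp_I_mul_ofReal, mul_one]
    exact mul_le_mul_of_nonneg_right (hbound a s hs) (norm_nonneg _)
  · exact (((hderiv a s).ofReal_comp.const_mul I).cexp.mul_const (g a)).congr_deriv (by ring)

lemma Polynomial.abs_eval_le (P : ℝ[X]) (y : ℝ) :
    |P.eval y| ≤
      (∑ i ∈ Finset.range (P.natDegree + 1), |P.coeff i|) * (1 + |y|) ^ P.natDegree := by
  rw [eval_eq_sum_range, Finset.sum_mul]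
  refine (Finset.abs_sum_le_sum_abs _ _).trans (Finset.sum_le_sum fun i hi => ?_)
  rw [abs_mul, abs_pow]
  gcongr
  calc |y| ^ i ≤ (1 + |y|) ^ i := by gcongr; linarith
    _ ≤ (1 + |y|) ^ P.natDegree :=
      pow_le_pow_right₀ (le_add_of_nonneg_right (abs_nonneg y))
        (Nat.lt_succ_iff.mp (Finset.mem_range.mp hi))

lemma SchwartzMap.integrable_one_add_norm_pow_mul {D V : Type*} [NormedAddCommGroup D]
    [NormedSpace ℝ D] [MeasurableSpace D] [BorelSpace D] [SecondCountableTopology D]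
    [NormedAddCommGroup V] [NormedSpace ℝ V] {μ : Measure D} [μ.HasTemperateGrowth]
    (f : 𝓢(D, V)) (n : ℕ) : Integrable (fun x => (1 + ‖x‖) ^ n * ‖f x‖) μ := by
  have hbinom : (fun x => (1 + ‖x‖) ^ n * ‖f x‖)
      = fun x => ∑ k ∈ Finset.range (n + 1), (n.choose k : ℝ) * (‖x‖ ^ k * ‖f x‖) := by
    ext x
    rw [add_comm, add_pow, Finset.sum_mul]
    refine Finset.sum_congr rfl fun k _ => ?_
    ring
  rw [hbinom]
  exact integrable_finsetSum _ fun k _ => (f.integrable_pow_mul μ k).const_mul _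

def symbol (p : Fin d → ℝ[X]) (ξ : Rd d) : ℝ := ∑ j, (p j).eval (ξ j)

lemma exists_abs_symbol_le (p : Fin d → ℝ[X]) :
    ∃ C ≥ 0, ∃ N, ∀ ξ : Rd d, |symbol p ξ| ≤ C * (1 + ‖ξ‖) ^ N := by
  refine ⟨∑ j, ∑ i ∈ Finset.range ((p j).natDegree + 1), |(p j).coeff i|, by positivity,
    ∑ j, (p j).natDegree, fun ξ => ?_⟩
  rw [symbol, Finset.sum_mul]
  refine (Finset.abs_sum_le_sum_abs _ _).trans (Finset.sum_le_sum fun j _ => ?_)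
  refine ((p j).abs_eval_le (ξ j)).trans ?_
  have hcoord : |ξ j| ≤ ‖ξ‖ := by simpa using PiLp.norm_apply_le ξ j
  gcongr
  calc (1 + |ξ j|) ^ (p j).natDegree ≤ (1 + ‖ξ‖) ^ (p j).natDegree := by gcongr
    _ ≤ (1 + ‖ξ‖) ^ ∑ j, (p j).natDegree :=
      pow_le_pow_right₀ (le_add_of_nonneg_right (norm_nonneg ξ))
        (Finset.single_le_sum (f := fun j => (p j).natDegree) (fun _ _ => Nat.zero_le _)
          (Finset.mem_univ j))

lemma exists_abs_symbol_sub_smul_le (p : Fin d → ℝ[X]) (v : Rd d) (t : ℝ) :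
    ∃ C N, ∀ ξ : Rd d, ∀ s ∈ Metric.ball t 1, |symbol p (ξ - s • v)| ≤ C * (1 + ‖ξ‖) ^ N := by
  obtain ⟨C, hC0, N, hC⟩ := exists_abs_symbol_le p
  refine ⟨C * (1 + (|t| + 1) * ‖v‖) ^ N, N, fun ξ s hs => (hC _).trans ?_⟩
  have hs : |s| ≤ |t| + 1 := by
    rw [Metric.mem_ball, Real.dist_eq] at hs
    linarith [abs_sub_abs_le_abs_sub s t]
  have hsv : ‖s • v‖ ≤ (|t| + 1) * ‖v‖ := by
    rw [norm_smul, Real.norm_eq_abs]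
    gcongr
  rw [mul_assoc, ← mul_pow]
  gcongr
  nlinarith [norm_sub_le ξ (s • v), norm_nonneg ξ, norm_nonneg (s • v)]

@[fun_prop]
lemma continuous_phase (Q : Fin d → ℝ[X]) (v : Rd d) (t : ℝ) : Continuous (phase Q v t) := by
  unfold phase
  fun_prop

lemma hasDerivAt_phase {p Q : Fin d → ℝ[X]} (hQ : ∀ j, derivative (Q j) = p j) {v : Rd d}
    (hv : ∀ j, v j ≠ 0) (ξ : Rd d) (s : ℝ) :
    HasDerivAt (phase Q v · ξ) (-symbol p (ξ - s • v)) s := by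
  have hterm : ∀ j, HasDerivAt
      (fun s => (v j)⁻¹ * ((Q j).eval (ξ j - s * v j) - (Q j).eval (ξ j)))
      (-(p j).eval (ξ j - s * v j)) s := fun j => by
    have hcomp := ((Q j).hasDerivAt (ξ j - s * v j)).comp s
      ((hasDerivAt_mul_const (v j)).const_sub (ξ j))
    refine ((hcomp.sub_const ((Q j).eval (ξ j))).const_mul (v j)⁻¹).congr_deriv ?_
    rw [hQ j]
    field_simp [hv j]
  simpa [symbol, phase] using HasDerivAt.fun_sum (u := Finset.univ) fun j _ => hterm j

lemma hasDerivAt_FTinv_cexp_phase_mul {p Q : Fin d → ℝ[X]} (hQ : ∀ j, derivative (Q j) = p j)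
    {v : Rd d} (hv : ∀ j, v j ≠ 0) (f : 𝓢(Rd d, ℂ)) (x : Rd d) (t : ℝ) :
    HasDerivAt (fun s => FTinv (fun ξ => cexp (I * phase Q v s ξ) * FT f ξ) x)
      (-I * FTinv (fun ξ => symbol p (ξ - t • v) * (cexp (I * phase Q v t ξ) * FT f ξ)) x)
      t := by
  obtain ⟨C, N, hCN⟩ := exists_abs_symbol_sub_smul_le p v t
  have hnorm : ∀ ξ, ‖FT f ξ * cexp (I * ⟪x, ξ⟫_ℝ)‖ = ‖FT f ξ‖ := fun ξ => by
    rw [norm_mul, norm_exp_I_mul_ofReal, mul_one]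
  have hg : Integrable (fun ξ => FT f ξ * cexp (I * ⟪x, ξ⟫_ℝ)) :=
    (integrable_FT f).mul_bdd (c := 1) (by fun_prop)
      (.of_forall fun ξ => (norm_exp_I_mul_ofReal _).le)
  have hBg : Integrable (fun ξ => C * (1 + ‖ξ‖) ^ N * ‖FT f ξ * cexp (I * ⟪x, ξ⟫_ℝ)‖) := by
    refine (((schwartzFT f).integrable_one_add_norm_pow_mul (μ := volume) N).const_mul
      C).congr (.of_forall fun ξ => ?_)
    dsimp only
    rw [hnorm, coe_schwartzFT, mul_assoc]
  have key := hasDerivAt_integral_cexp_mul (Metric.ball_mem_nhds t one_pos)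
    (φ' := fun s ξ => -symbol p (ξ - s • v)) (fun s => (continuous_phase Q v s).measurable)
    (by unfold symbol; fun_prop) hg hBg (fun ξ s => hasDerivAt_phase hQ hv ξ s)
    (fun ξ s hs => (abs_neg (symbol p _)).trans_le (hCN ξ s hs))
  have hFTinv : ∀ s, FTinv (fun ξ => cexp (I * phase Q v s ξ) * FT f ξ) x
      = (((2 * π) ^ (-(d : ℝ) / 2) : ℝ) : ℂ) *
        ∫ ξ, cexp (I * phase Q v s ξ) * (FT f ξ * cexp (I * ⟪x, ξ⟫_ℝ)) := fun s => by
    simp only [FTinv, mul_assoc]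
  simp only [hFTinv]
  refine (key.const_mul _).congr_deriv ?_
  simp only [FTinv, ← integral_const_mul]
  congr 1
  ext ξ
  push_cast
  ring

def propagator (Q : Fin d → ℝ[X]) (v : Rd d) (t : ℝ) (f : Rd d → ℂ) (x : Rd d) : ℂ :=
  cexp (-I * t * ⟪x, v⟫_ℝ) * FTinv (fun ξ => cexp (I * phase Q v t ξ) * FT f ξ) x

lemma propagator_zero (Q : Fin d → ℝ[X]) (v : Rd d) (f : 𝓢(Rd d, ℂ)) :
    propagator Q v 0 f = f := by
  ext x
  simp [propagator, phase, FTinv_FT]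

lemma FT_propagator (Q : Fin d → ℝ[X]) (v : Rd d) (t : ℝ) (f : 𝓢(Rd d, ℂ))
    (hint : Integrable (propagator Q v t f)) (ξ : Rd d) :
    FT (propagator Q v t f) ξ = cexp (I * phase Q v t (ξ + t • v)) * FT f (ξ + t • v) := by
  set h := fun ξ => cexp (I * phase Q v t ξ) * FT f ξ
  have hmod : ∀ x, cexp (-I * t * ⟪x, v⟫_ℝ) = cexp (-I * ⟪x, t • v⟫_ℝ) := fun x => by
    rw [real_inner_smul_right, ofReal_mul, mul_assoc]
  have hprop : propagator Q v t f = fun x => cexp (-I * ⟪x, t • v⟫_ℝ) * FTinv h x := by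
    ext x
    rw [propagator, hmod]
  have hinv : Integrable (FTinv h) := by
    have hdemod : FTinv h = fun x => cexp (I * ⟪x, t • v⟫_ℝ) * propagator Q v t f x := by
      ext x
      rw [hprop, ← mul_assoc, ← Complex.exp_add, neg_mul, add_neg_cancel, Complex.exp_zero,
        one_mul]
    rw [hdemod]
    exact hint.bdd_mul (c := 1) (by fun_prop) (.of_forall fun x => (norm_exp_I_mul_ofReal _).le)
  have hg : Integrable h :=
    (integrable_FT f).bdd_mul (c := 1) (by fun_prop)
      (.of_forall fun ξ => (norm_exp_I_mul_ofReal _).le)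
  rw [hprop, FT_cexp_neg_inner_mul, FT_FTinv (by fun_prop) hg hinv]

lemma FTinv_symbol_mul_FT_propagator (p Q : Fin d → ℝ[X]) (v : Rd d) (t : ℝ)
    (f : 𝓢(Rd d, ℂ)) (hint : Integrable (propagator Q v t f)) (x : Rd d) :
    FTinv (fun ξ => symbol p ξ * FT (propagator Q v t f) ξ) x
      = cexp (-I * t * ⟪x, v⟫_ℝ) *
        FTinv (fun ξ => symbol p (ξ - t • v) * (cexp (I * phase Q v t ξ) * FT f ξ)) x := by
  have hshift := FTinv_comp_add_right
    (fun η => (symbol p (η - t • v) : ℂ) * (cexp (I * phase Q v t η) * FT f η)) (t • v) x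
  simp only [add_sub_cancel_right, ← FT_propagator Q v t f hint] at hshift
  rw [hshift, real_inner_smul_right, ofReal_mul, ← mul_assoc, mul_right_comm (-I)]

lemma hasDerivAt_propagator {p Q : Fin d → ℝ[X]} (hQ : ∀ j, derivative (Q j) = p j)
    {v : Rd d} (hv : ∀ j, v j ≠ 0) (f : 𝓢(Rd d, ℂ)) (x : Rd d) (t : ℝ)
    (hint : Integrable (propagator Q v t f)) :
    HasDerivAt (fun s => propagator Q v s f x)
      (-I * (FTinv (fun ξ => symbol p ξ * FT (propagator Q v t f) ξ) x
        + ⟪x, v⟫_ℝ * propagator Q v t f x)) t := by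
  have hmod : HasDerivAt (fun s : ℝ => cexp (-I * s * ⟪x, v⟫_ℝ))
      (cexp (-I * t * ⟪x, v⟫_ℝ) * (-I * ⟪x, v⟫_ℝ)) t :=
    (((hasDerivAt_id' t).ofReal_comp.const_mul (-I)).mul_const _).cexp.congr_deriv
      (by push_cast; ring)
  refine (hmod.mul (hasDerivAt_FTinv_cexp_phase_mul hQ hv f x t)).congr_deriv ?_
  rw [FTinv_symbol_mul_FT_propagator p Q v t f hint, propagator]
  ring

end

theorem statement9_general {d : ℕ} (v : Rd d) (hv : ∀ j, v j ≠ 0)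
    (p : Fin d → Polynomial ℝ)
    (Q : Fin d → Polynomial ℝ) (hQ : ∀ j, Polynomial.derivative (Q j) = p j)
    -- the propagator on Schwartz functions (in particular `u(t,·) ∈ 𝒮(ℝ^d)`)
    (K : ℝ → SchwartzMap (Rd d) ℂ → SchwartzMap (Rd d) ℂ)
    (hK : ∀ (t : ℝ) (f : SchwartzMap (Rd d) ℂ) (x : Rd d),
      K t f x = Complex.exp (-Complex.I * (t : ℂ) * ((⟪x, v⟫_ℝ : ℝ) : ℂ)) *
        FTinv (fun ξ => Complex.exp (Complex.I * ((phase Q v t ξ : ℝ) : ℂ)) * FT (⇑f) ξ) x) :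
    ∀ u₀ : SchwartzMap (Rd d) ℂ,
      K 0 u₀ = u₀ ∧
      ∀ (t : ℝ) (x : Rd d),
        HasDerivAt (fun s : ℝ => K s u₀ x)
          (-Complex.I *
            (FTinv (fun ξ => (((∑ j, (p j).eval (ξ j) : ℝ)) : ℂ) * FT (⇑(K t u₀)) ξ) x
              + ((⟪x, v⟫_ℝ : ℝ) : ℂ) * K t u₀ x)) t := by
  intro u₀
  have hKu : ∀ t, ⇑(K t u₀) = propagator Q v t u₀ := fun t => funext (hK t u₀)
  refine ⟨?_, fun t x => ?_⟩
  · ext x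
    rw [hKu, propagator_zero]
  · simp only [hKu]
    exact hasDerivAt_propagator hQ hv u₀ x t (hKu t ▸ (K t u₀).integrable)

/-- For `u₀ ∈ 𝒮(ℝ^d)`, `u(t,·) = 𝒦_t u₀` is Schwartz for every `t`, `t ↦ u(t,x)` is
differentiable, `u(0,·) = u₀`, and `∂_t u(t,x) + i (p(D)u(t,·)(x) + ⟨v,x⟩u(t,x)) = 0`,
where `p(D)f = ℱ^{-1}(p·ℱf)`. -/
theorem statement9 {d : ℕ} (v : Rd d) (hv : ∀ j, v j ≠ 0)
    (p : Fin d → Polynomial ℝ) (m : ℕ) (hm : 2 ≤ m)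
    (hdeg : ∀ j, (p j).natDegree ≤ m) (hdeg' : ∃ j, (p j).natDegree = m)
    (Q : Fin d → Polynomial ℝ) (hQ : ∀ j, Polynomial.derivative (Q j) = p j)
    -- the propagator on Schwartz functions (in particular `u(t,·) ∈ 𝒮(ℝ^d)`)
    (K : ℝ → SchwartzMap (Rd d) ℂ → SchwartzMap (Rd d) ℂ)
    (hK : ∀ (t : ℝ) (f : SchwartzMap (Rd d) ℂ) (x : Rd d),
      K t f x = Complex.exp (-Complex.I * (t : ℂ) * ((⟪x, v⟫_ℝ : ℝ) : ℂ)) *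
        FTinv (fun ξ => Complex.exp (Complex.I * ((phase Q v t ξ : ℝ) : ℂ)) * FT (⇑f) ξ) x) :
    ∀ u₀ : SchwartzMap (Rd d) ℂ,
      K 0 u₀ = u₀ ∧
      ∀ (t : ℝ) (x : Rd d),
        HasDerivAt (fun s : ℝ => K s u₀ x)
          (-Complex.I *
            (FTinv (fun ξ => (((∑ j, (p j).eval (ξ j) : ℝ)) : ℂ) * FT (⇑(K t u₀)) ξ) x
              + ((⟪x, v⟫_ℝ : ℝ) : ℂ) * K t u₀ x)) t :=
  statement9_general v hv p Q hQ K hK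
end
end

section
/- Let σ > 0 and suppose a ∈ C^∞(ℝ^{2d} \ {0}) is real-valued and satisfies a(λx, λ^σ ξ) = λ^{σ+1} a(x,ξ) for all (x,ξ) ∈ T*ℝ^d \ {0} and λ > 0. Then there exists T > 0 such that for every (x,ξ) ∈ T*ℝ^d \ {0}, Hamilton's equations for a with initial datum (x,ξ) have a unique solution χ_t(x,ξ) ∈ T*ℝ^d \ {0} defined for all t ∈ [−T,T], and the flow commutes with anisotropic scaling: χ_t(Λ_σ(λ)(x,ξ)) = Λ_σ(λ) χ_t(x,ξ) for all λ > 0, (x,ξ) ∈ T*ℝ^d \ {0}, and t ∈ [−T,T]. -/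
noncomputable section

open Real Filter MeasureTheory Set
open scoped BigOperators Topology

/-- The basis direction `(e_j, 0)` in phase space. -/
def eX {d : ℕ} (j : Fin d) : Rd d × Rd d := (EuclideanSpace.single j (1:ℝ), 0)

/-- The basis direction `(0, e_j)` in phase space. -/
def eXi {d : ℕ} (j : Fin d) : Rd d × Rd d := (0, EuclideanSpace.single j (1:ℝ))

/-- Directional (partial) derivative of a phase-space function along `v`. -/
def pdir {d : ℕ} {F : Type*} [NormedAddCommGroup F] [NormedSpace ℝ F]
    (v : Rd d × Rd d) (a : Rd d × Rd d → F) (p : Rd d × Rd d) : F :=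
  fderiv ℝ a p v

/-- The anisotropic scaling `Λ_σ(λ)(x,ξ) = (λx, λ^σ ξ)`. -/
def scaleA (σ l : ℝ) {d : ℕ} (p : Rd d × Rd d) : Rd d × Rd d :=
  (l • p.1, l ^ σ • p.2)

/-- `y : ℝ → T*ℝ^d` solves Hamilton's equations for `a` on `[-T,T]` with initial
datum `p`, staying away from the origin. -/
def IsHamiltonSolution {d : ℕ} (a : Rd d × Rd d → ℝ) (T : ℝ)
    (p : Rd d × Rd d) (y : ℝ → Rd d × Rd d) : Prop :=
  y 0 = p ∧
  ∀ t ∈ Icc (-T) T, y t ≠ 0 ∧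
    ∀ j : Fin d,
      HasDerivWithinAt (fun s => (y s).1 j) (pdir (eXi j) a (y t)) (Icc (-T) T) t ∧
      HasDerivWithinAt (fun s => (y s).2 j) (-(pdir (eX j) a (y t))) (Icc (-T) T) t

/-! Differentiating the homogeneity relation gives `∂_ξ a ∘ Λ_σ(λ) = λ ∂_ξ a` and
`∂_x a ∘ Λ_σ(λ) = λ^σ ∂_x a`, so the Hamilton vector field commutes with `Λ_σ(λ)` and `Λ_σ(λ)` maps
solutions to solutions. Since `σ > 0`, every nonzero point is scaled onto the unit sphere, where
Picard–Lindelöf on the compact annulus `1/2 ≤ ‖p‖ ≤ 3/2` gives a uniform existence time; scaling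
back gives a solution on `[-T, T]` from every initial point. The vector field is `C¹`, hence
Lipschitz on the compact set swept out by two solutions, which gives uniqueness, and uniqueness
turns "`Λ_σ(λ)` maps solutions to solutions" into the commutation `χ_t ∘ Λ_σ(λ) = Λ_σ(λ) ∘ χ_t`. -/

open Metric
open scoped NNReal

theorem hasDerivWithinAt_euclideanSpace_iff {ι : Type*} [Fintype ι]
    {f : ℝ → EuclideanSpace ℝ ι} {f' : EuclideanSpace ℝ ι} {s : Set ℝ} {t : ℝ} :
    HasDerivWithinAt f f' s t ↔ ∀ i, HasDerivWithinAt (fun u => f u i) (f' i) s t := by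
  simp only [hasDerivWithinAt_iff_hasFDerivWithinAt, hasFDerivWithinAt_piLp]
  rfl

theorem hasDerivWithinAt_prodMk_iff {E F : Type*} [NormedAddCommGroup E] [NormedSpace ℝ E]
    [NormedAddCommGroup F] [NormedSpace ℝ F] {y : ℝ → E × F} {v : E} {w : F} {s : Set ℝ}
    {t : ℝ} : HasDerivWithinAt y (v, w) s t ↔
      HasDerivWithinAt (fun u => (y u).1) v s t ∧ HasDerivWithinAt (fun u => (y u).2) w s t :=
  ⟨fun h => ⟨(ContinuousLinearMap.fst ℝ E F).hasFDerivAt.comp_hasDerivWithinAt t h,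
    (ContinuousLinearMap.snd ℝ E F).hasFDerivAt.comp_hasDerivWithinAt t h⟩,
    fun h => h.1.prodMk h.2⟩

theorem fderiv_apply_map_eq_smul_of_eventuallyEq {E F : Type*} [NormedAddCommGroup E]
    [NormedSpace ℝ E] [NormedAddCommGroup F] [NormedSpace ℝ F] {a : E → F} {L : E →L[ℝ] E}
    {c : ℝ} {p : E} (haL : DifferentiableAt ℝ a (L p)) (ha : DifferentiableAt ℝ a p)
    (h : (fun q => a (L q)) =ᶠ[𝓝 p] fun q => c • a q) (v : E) :
    fderiv ℝ a (L p) (L v) = c • fderiv ℝ a p v := by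
  have hcomp : fderiv ℝ (fun q => a (L q)) p = (fderiv ℝ a (L p)).comp L :=
    (haL.hasFDerivAt.comp p L.hasFDerivAt).fderiv
  rw [← ContinuousLinearMap.comp_apply, ← hcomp, h.fderiv_eq, fderiv_fun_const_smul ha]
  rfl

section ODE

variable {E : Type*} [NormedAddCommGroup E] [NormedSpace ℝ E]

theorem ContDiffOn.locallyLipschitzOn_of_isOpen {F : Type*} [NormedAddCommGroup F]
    [NormedSpace ℝ F] {f : E → F} {U : Set E} (hU : IsOpen U) (hf : ContDiffOn ℝ 1 f U) :
    LocallyLipschitzOn U f := fun x hx => by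
  obtain ⟨K, t, ht, hK⟩ := (hf.contDiffAt (hU.mem_nhds hx)).exists_lipschitzOnWith
  exact ⟨K, t, mem_nhdsWithin_of_mem_nhds ht, hK⟩

theorem mem_closedBall_of_forall_hasDerivWithinAt_Ici {F : E → E} {x₀ : E} {r : ℝ≥0}
    {M T : ℝ} (hM : ∀ x ∈ closedBall x₀ r, ‖F x‖ < M) (hMT : M * T ≤ r) {y : ℝ → E}
    (hy₀ : y 0 = x₀) (hy : ContinuousOn y (Icc 0 T))
    (hy' : ∀ t ∈ Ico 0 T, HasDerivWithinAt y (F (y t)) (Ici t) t) :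
    ∀ t ∈ Icc 0 T, y t ∈ closedBall x₀ r := by
  have hM₀ : 0 ≤ M := (norm_nonneg _).trans (hM x₀ (mem_closedBall_self r.2)).le
  have hle : ∀ t ∈ Icc 0 T, M * t ≤ r := fun t ht =>
    (mul_le_mul_of_nonneg_left ht.2 hM₀).trans hMT
  -- a fence argument: `‖y t - x₀‖` can only reach `M t` inside the ball, where `‖y'‖ < M`
  have hfence : ∀ t ∈ Icc 0 T, ‖y t - x₀‖ ≤ M * t :=
    image_norm_le_of_norm_deriv_right_lt_deriv_boundary (hy.sub continuousOn_const)
      (fun t ht => (hy' t ht).sub_const x₀) (by simp [hy₀])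
      (fun t => by simpa using (hasDerivAt_id t).const_mul M)
      fun t ht heq => hM _ <| mem_closedBall_iff_norm.2 <|
        heq.le.trans (hle t (Ico_subset_Icc_self ht))
  exact fun t ht => mem_closedBall_iff_norm.2 ((hfence t ht).trans (hle t ht))

theorem mem_closedBall_of_forall_hasDerivWithinAt_Icc {F : E → E} {x₀ : E} {r : ℝ≥0}
    {M T : ℝ} (hM : ∀ x ∈ closedBall x₀ r, ‖F x‖ < M) (hMT : M * T ≤ r) {y : ℝ → E}
    (hy₀ : y 0 = x₀) (hy : ∀ t ∈ Icc (-T) T, HasDerivWithinAt y (F (y t)) (Icc (-T) T) t) :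
    ∀ t ∈ Icc (-T) T, y t ∈ closedBall x₀ r := by
  have forward : ∀ {G : E → E} {z : ℝ → E}, (∀ x ∈ closedBall x₀ r, ‖G x‖ < M) → z 0 = x₀ →
      (∀ t ∈ Icc (-T) T, HasDerivWithinAt z (G (z t)) (Icc (-T) T) t) →
      ∀ t ∈ Icc 0 T, z t ∈ closedBall x₀ r := fun hG hz₀ hz t ht => by
    have hsub : Icc 0 T ⊆ Icc (-T) T := Icc_subset_Icc_left (by linarith [ht.1, ht.2])
    refine mem_closedBall_of_forall_hasDerivWithinAt_Ici hG hMT hz₀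
      (fun s hs => (hz s (hsub hs)).continuousWithinAt.mono hsub)
      (fun s hs => (hz s (hsub (Ico_subset_Icc_self hs))).mono_of_mem_nhdsWithin ?_) t ht
    exact Icc_mem_nhdsGE_of_mem ⟨by linarith [hs.1, ht.1, ht.2], hs.2⟩
  have hmaps : MapsTo Neg.neg (Icc (-T) T) (Icc (-T) T) := fun s hs =>
    ⟨by linarith [hs.2], by linarith [hs.1]⟩
  have backward := forward (G := fun x => -F x) (z := fun s => y (-s))
    (fun x hx => by simpa using hM x hx) (by simpa using hy₀)
    (fun s hs => by simpa [Function.comp_def] using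
      (hy (-s) (hmaps hs)).scomp s (hasDerivWithinAt_neg s _) hmaps)
  intro t ht
  rcases le_total 0 t with h | h
  · exact forward hM hy₀ hy t ⟨h, ht.2⟩
  · simpa using backward (-t) ⟨by linarith, by linarith [ht.1]⟩

theorem exists_forall_mem_Icc_hasDerivWithinAt_mem_closedBall [CompleteSpace E] {F : E → E}
    {x₀ : E} {r K : ℝ≥0} {M T : ℝ} (hF : LipschitzOnWith K F (closedBall x₀ r))
    (hM : ∀ x ∈ closedBall x₀ r, ‖F x‖ < M) (hT : 0 ≤ T) (hMT : M * T ≤ r) :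
    ∃ y : ℝ → E, y 0 = x₀ ∧ ∀ t ∈ Icc (-T) T,
      y t ∈ closedBall x₀ r ∧ HasDerivWithinAt y (F (y t)) (Icc (-T) T) t := by
  have hM₀ : 0 ≤ M := (norm_nonneg _).trans (hM x₀ (mem_closedBall_self r.2)).le
  obtain ⟨y, hy₀, hy⟩ := IsPicardLindelof.exists_eq_forall_mem_Icc_hasDerivWithinAt₀
    (IsPicardLindelof.of_time_independent (tmin := -T) (tmax := T) (t₀ := ⟨0, by simp [hT]⟩)
      (L := ⟨M, hM₀⟩) (r := 0) (fun x hx => (hM x hx).le) hF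
      (by simp only [sub_zero, sub_neg_eq_add, zero_add, max_self, NNReal.coe_zero]; exact hMT))
  exact ⟨y, hy₀, fun t ht =>
    ⟨mem_closedBall_of_forall_hasDerivWithinAt_Icc hM hMT hy₀ hy t ht, hy t ht⟩⟩

theorem LocallyLipschitzOn.eqOn_Icc_of_hasDerivWithinAt {F : E → E} {U : Set E}
    (hF : LocallyLipschitzOn U F) {a b t₀ : ℝ} (ht₀ : t₀ ∈ Ioo a b) {y z : ℝ → E}
    (hy : ∀ t ∈ Icc a b, y t ∈ U ∧ HasDerivWithinAt y (F (y t)) (Icc a b) t)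
    (hz : ∀ t ∈ Icc a b, z t ∈ U ∧ HasDerivWithinAt z (F (z t)) (Icc a b) t)
    (h : y t₀ = z t₀) : EqOn y z (Icc a b) := by
  have hyc : ContinuousOn y (Icc a b) := fun t ht => (hy t ht).2.continuousWithinAt
  have hzc : ContinuousOn z (Icc a b) := fun t ht => (hz t ht).2.continuousWithinAt
  set C := y '' Icc a b ∪ z '' Icc a b
  have hCU : C ⊆ U := union_subset (image_subset_iff.2 fun t ht => (hy t ht).1)
    (image_subset_iff.2 fun t ht => (hz t ht).1)
  obtain ⟨K, hK⟩ := (hF.mono hCU).exists_lipschitzOnWith_of_compact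
    ((isCompact_Icc.image_of_continuousOn hyc).union (isCompact_Icc.image_of_continuousOn hzc))
  have hderiv : ∀ {w : ℝ → E}, (∀ t ∈ Icc a b, HasDerivWithinAt w (F (w t)) (Icc a b) t) →
      ∀ t ∈ Ioo a b, HasDerivAt w (F (w t)) t := fun hw t ht =>
    (hw t (Ioo_subset_Icc_self ht)).hasDerivAt (Icc_mem_nhds ht.1 ht.2)
  exact ODE_solution_unique_of_mem_Icc (s := fun _ => C) (fun _ _ => hK) ht₀
    hyc (hderiv fun t ht => (hy t ht).2)
    (fun t ht => Or.inl (mem_image_of_mem y (Ioo_subset_Icc_self ht)))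
    hzc (hderiv fun t ht => (hz t ht).2)
    (fun t ht => Or.inr (mem_image_of_mem z (Ioo_subset_Icc_self ht))) h

end ODE

section HamiltonFlow

variable {d : ℕ}

def hamiltonVectorField (a : Rd d × Rd d → ℝ) (p : Rd d × Rd d) : Rd d × Rd d :=
  (WithLp.toLp 2 fun j => pdir (eXi j) a p, WithLp.toLp 2 fun j => -pdir (eX j) a p)

theorem isHamiltonSolution_iff {a : Rd d × Rd d → ℝ} {T : ℝ} {p : Rd d × Rd d}
    {y : ℝ → Rd d × Rd d} : IsHamiltonSolution a T p y ↔ y 0 = p ∧ ∀ t ∈ Icc (-T) T,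
      y t ≠ 0 ∧ HasDerivWithinAt y (hamiltonVectorField a (y t)) (Icc (-T) T) t := by
  simp only [IsHamiltonSolution, hamiltonVectorField, hasDerivWithinAt_prodMk_iff,
    hasDerivWithinAt_euclideanSpace_iff, forall_and]

theorem contDiffOn_hamiltonVectorField {n : WithTop ℕ∞} {a : Rd d × Rd d → ℝ}
    {U : Set (Rd d × Rd d)} (hU : IsOpen U) (ha : ContDiffOn ℝ (n + 1) a U) :
    ContDiffOn ℝ n (hamiltonVectorField a) U := by
  have hda : ContDiffOn ℝ n (fderiv ℝ a) U := ha.fderiv_of_isOpen hU le_rfl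
  exact ((contDiffOn_piLp _).2 fun j => hda.clm_apply contDiffOn_const).prodMk
    ((contDiffOn_piLp _).2 fun j => (hda.clm_apply contDiffOn_const).neg)

-- `scaleA σ l` as a continuous linear map; `scaleCLM σ l d p = scaleA σ l p` holds by `rfl`.
def scaleCLM (σ l : ℝ) (d : ℕ) : (Rd d × Rd d) →L[ℝ] Rd d × Rd d :=
  (l • ContinuousLinearMap.id ℝ (Rd d)).prodMap (l ^ σ • ContinuousLinearMap.id ℝ (Rd d))

theorem scaleA_scaleA (σ : ℝ) {l m : ℝ} (hl : 0 ≤ l) (hm : 0 ≤ m) (p : Rd d × Rd d) :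
    scaleA σ l (scaleA σ m p) = scaleA σ (l * m) p := by
  simp [scaleA, smul_smul, Real.mul_rpow hl hm]

theorem scaleA_one (σ : ℝ) (p : Rd d × Rd d) : scaleA σ 1 p = p := by
  simp [scaleA]

theorem scaleA_ne_zero {σ l : ℝ} (hl : 0 < l) {p : Rd d × Rd d} (hp : p ≠ 0) :
    scaleA σ l p ≠ 0 := by
  contrapose! hp
  simpa [scaleA, Prod.ext_iff, hl.ne', (Real.rpow_pos_of_pos hl σ).ne'] using hp

theorem norm_scaleA (σ : ℝ) {l : ℝ} (hl : 0 ≤ l) (p : Rd d × Rd d) :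
    ‖scaleA σ l p‖ = max (l * ‖p.1‖) (l ^ σ * ‖p.2‖) := by
  simp [scaleA, Prod.norm_def, norm_smul, abs_of_nonneg hl,
    abs_of_nonneg (Real.rpow_nonneg hl σ)]

theorem exists_norm_scaleA_eq_one {σ : ℝ} (hσ : 0 < σ) {p : Rd d × Rd d} (hp : p ≠ 0) :
    ∃ l, 0 < l ∧ ‖scaleA σ l p‖ = 1 := by
  have hcont : Continuous fun l => ‖scaleA σ l p‖ :=
    ((continuous_id.smul continuous_const).prodMk
      ((Real.continuous_rpow_const hσ.le).smul continuous_const)).norm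
  have hzero : ‖scaleA σ 0 p‖ = 0 := by simp [scaleA, Real.zero_rpow hσ.ne']
  obtain ⟨L, hL, hL1⟩ : ∃ L, 0 ≤ L ∧ 1 ≤ ‖scaleA σ L p‖ := by
    by_cases h1 : p.1 = 0
    · have h2 : p.2 ≠ 0 := fun h2 => hp (Prod.ext h1 h2)
      refine ⟨(‖p.2‖⁻¹) ^ σ⁻¹, by positivity, ?_⟩
      rw [norm_scaleA σ (by positivity), Real.rpow_inv_rpow (by positivity) hσ.ne',
        inv_mul_cancel₀ (norm_ne_zero_iff.2 h2)]
      exact le_max_right _ _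
    · refine ⟨‖p.1‖⁻¹, by positivity, ?_⟩
      rw [norm_scaleA σ (by positivity), inv_mul_cancel₀ (norm_ne_zero_iff.2 h1)]
      exact le_max_left _ _
  obtain ⟨l, hl, hl1⟩ := intermediate_value_Icc hL hcont.continuousOn
    ⟨hzero.le.trans zero_le_one, hL1⟩
  refine ⟨l, hl.1.lt_of_ne ?_, hl1⟩
  rintro rfl
  simp [hzero] at hl1

def IsQuasiHomogeneous (σ : ℝ) (a : Rd d × Rd d → ℝ) : Prop :=
  ∀ p : Rd d × Rd d, p ≠ 0 → ∀ l : ℝ, 0 < l → a (scaleA σ l p) = l ^ (σ + 1) * a p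

theorem hamiltonVectorField_scaleA {σ : ℝ} {a : Rd d × Rd d → ℝ}
    (ha : DifferentiableOn ℝ a {p | p ≠ 0}) (hhom : IsQuasiHomogeneous σ a) {l : ℝ} (hl : 0 < l)
    {p : Rd d × Rd d} (hp : p ≠ 0) :
    hamiltonVectorField a (scaleA σ l p) = scaleA σ l (hamiltonVectorField a p) := by
  have hdiff : ∀ {q : Rd d × Rd d}, q ≠ 0 → DifferentiableAt ℝ a q := fun hq =>
    ha.differentiableAt (isOpen_ne.mem_nhds hq)
  have hderiv := fderiv_apply_map_eq_smul_of_eventuallyEq (L := scaleCLM σ l d)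
    (hdiff (scaleA_ne_zero hl hp)) (hdiff hp) (by
      filter_upwards [isOpen_ne.mem_nhds hp] with q hq using hhom q hq l hl)
  have hpow : l ^ (σ + 1) = l ^ σ * l := Real.rpow_add_one hl.ne' σ
  have hlσ : l ^ σ ≠ 0 := (Real.rpow_pos_of_pos hl σ).ne'
  have hXi : ∀ j, pdir (eXi j) a (scaleA σ l p) = l * pdir (eXi j) a p := fun j => by
    have h := hderiv (eXi j)
    have hdir : scaleCLM σ l d (eXi j) = l ^ σ • eXi j := by simp [scaleCLM, eXi]
    rw [hdir, map_smul, smul_eq_mul, smul_eq_mul, hpow, mul_assoc] at h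
    exact mul_left_cancel₀ hlσ h
  have hX : ∀ j, pdir (eX j) a (scaleA σ l p) = l ^ σ * pdir (eX j) a p := fun j => by
    have h := hderiv (eX j)
    have hdir : scaleCLM σ l d (eX j) = l • eX j := by simp [scaleCLM, eX]
    rw [hdir, map_smul, smul_eq_mul, smul_eq_mul, hpow, mul_comm (l ^ σ), mul_assoc] at h
    exact mul_left_cancel₀ hl.ne' h
  simp only [hamiltonVectorField, hXi, hX]
  ext j <;> simp [scaleA]

theorem IsHamiltonSolution.scaleA {σ : ℝ} {a : Rd d × Rd d → ℝ}
    (ha : DifferentiableOn ℝ a {p | p ≠ 0}) (hhom : IsQuasiHomogeneous σ a) {T : ℝ}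
    {p : Rd d × Rd d} {y : ℝ → Rd d × Rd d} (hy : IsHamiltonSolution a T p y) {l : ℝ}
    (hl : 0 < l) : IsHamiltonSolution a T (scaleA σ l p) fun t => scaleA σ l (y t) := by
  rw [isHamiltonSolution_iff] at hy ⊢
  refine ⟨by rw [hy.1], fun t ht => ⟨scaleA_ne_zero hl (hy.2 t ht).1, ?_⟩⟩
  rw [hamiltonVectorField_scaleA ha hhom hl (hy.2 t ht).1]
  exact (scaleCLM σ l d).hasFDerivAt.comp_hasDerivWithinAt t (hy.2 t ht).2

theorem IsHamiltonSolution.eqOn {a : Rd d × Rd d → ℝ} (ha : ContDiffOn ℝ 2 a {p | p ≠ 0})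
    {T : ℝ} (hT : 0 < T) {p : Rd d × Rd d} {y z : ℝ → Rd d × Rd d}
    (hy : IsHamiltonSolution a T p y) (hz : IsHamiltonSolution a T p z) :
    EqOn y z (Icc (-T) T) := by
  rw [isHamiltonSolution_iff] at hy hz
  have hX := contDiffOn_hamiltonVectorField (n := 1) isOpen_ne ha
  exact (hX.locallyLipschitzOn_of_isOpen isOpen_ne).eqOn_Icc_of_hasDerivWithinAt
    ⟨neg_lt_zero.2 hT, hT⟩ hy.2 hz.2 (hy.1.trans hz.1.symm)

theorem exists_pos_forall_norm_eq_one_exists_isHamiltonSolution {a : Rd d × Rd d → ℝ}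
    (ha : ContDiffOn ℝ 2 a {p | p ≠ 0}) :
    ∃ T > 0, ∀ q : Rd d × Rd d, ‖q‖ = 1 → ∃ y, IsHamiltonSolution a T q y := by
  have hX := contDiffOn_hamiltonVectorField (n := 1) isOpen_ne ha
  set A : Set (Rd d × Rd d) := {x | 1 / 2 ≤ ‖x‖} ∩ closedBall 0 (3 / 2)
  have hA : IsCompact A :=
    (isCompact_closedBall _ _).inter_left (isClosed_le continuous_const continuous_norm)
  have hAU : A ⊆ {p | p ≠ 0} := fun x hx h0 => by norm_num [h0, A] at hx
  have hball : ∀ q : Rd d × Rd d, ‖q‖ = 1 → closedBall q (1 / 2) ⊆ A := fun q hq x hx => by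
    rw [mem_closedBall_iff_norm] at hx
    refine ⟨?_, mem_closedBall_zero_iff.2 ?_⟩
    · show 1 / 2 ≤ ‖x‖
      linarith [norm_sub_norm_le q x, norm_sub_rev x q]
    · linarith [norm_le_norm_add_norm_sub' x q]
  obtain ⟨K, hK⟩ :=
    ((hX.locallyLipschitzOn_of_isOpen isOpen_ne).mono hAU).exists_lipschitzOnWith_of_compact hA
  obtain ⟨M, hM⟩ := hA.exists_bound_of_continuousOn (hX.continuousOn.mono hAU)
  refine ⟨1 / (2 * (|M| + 1)), by positivity, fun q hq => ?_⟩
  obtain ⟨y, hy₀, hy⟩ := exists_forall_mem_Icc_hasDerivWithinAt_mem_closedBall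
    (r := ⟨1 / 2, by norm_num⟩) (M := |M| + 1) (T := 1 / (2 * (|M| + 1)))
    (hK.mono (hball q hq))
    (fun x hx => (hM x (hball q hq hx)).trans_lt (by linarith [le_abs_self M])) (by positivity)
    (le_of_eq (by show _ = (1 / 2 : ℝ); field_simp))
  exact ⟨y, isHamiltonSolution_iff.2
    ⟨hy₀, fun t ht => ⟨hAU (hball q hq (hy t ht).1), (hy t ht).2⟩⟩⟩

theorem exists_pos_forall_ne_zero_exists_isHamiltonSolution {σ : ℝ} (hσ : 0 < σ)
    {a : Rd d × Rd d → ℝ} (ha : ContDiffOn ℝ 2 a {p | p ≠ 0}) (hhom : IsQuasiHomogeneous σ a) :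
    ∃ T > 0, ∀ p : Rd d × Rd d, p ≠ 0 → ∃ y, IsHamiltonSolution a T p y := by
  obtain ⟨T, hT, hsphere⟩ := exists_pos_forall_norm_eq_one_exists_isHamiltonSolution ha
  refine ⟨T, hT, fun p hp => ?_⟩
  obtain ⟨l, hl, hl1⟩ := exists_norm_scaleA_eq_one hσ hp
  obtain ⟨y, hy⟩ := hsphere _ hl1
  have hscaled := hy.scaleA (ha.differentiableOn two_ne_zero) hhom (inv_pos.2 hl)
  rw [scaleA_scaleA σ (inv_pos.2 hl).le hl.le, inv_mul_cancel₀ hl.ne', scaleA_one] at hscaled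
  exact ⟨_, hscaled⟩

end HamiltonFlow

/-- For an anisotropically homogeneous Hamiltonian of degree `σ+1` the Hamilton flow
exists and is unique on a uniform time interval `[-T,T]`, and it commutes with the
anisotropic scaling `Λ_σ(λ)`. -/
theorem statement14 {d : ℕ} (σ : ℝ) (hσ : 0 < σ) (a : Rd d × Rd d → ℝ)
    (ha : ContDiffOn ℝ (⊤ : ℕ∞) a {p : Rd d × Rd d | p ≠ 0})
    (hhom : ∀ p : Rd d × Rd d, p ≠ 0 → ∀ l : ℝ, 0 < l →
      a (scaleA σ l p) = l ^ (σ + 1) * a p) :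
    ∃ T > (0 : ℝ), ∃ χ : ℝ → (Rd d × Rd d) → Rd d × Rd d,
      (∀ p : Rd d × Rd d, p ≠ 0 → IsHamiltonSolution a T p (fun t => χ t p)) ∧
      (∀ p : Rd d × Rd d, p ≠ 0 → ∀ y : ℝ → Rd d × Rd d,
        IsHamiltonSolution a T p y → ∀ t ∈ Icc (-T) T, y t = χ t p) ∧
      (∀ l : ℝ, 0 < l → ∀ p : Rd d × Rd d, p ≠ 0 → ∀ t ∈ Icc (-T) T,
        χ t (scaleA σ l p) = scaleA σ l (χ t p)) := by
  have ha₂ : ContDiffOn ℝ 2 a {p | p ≠ 0} := ha.of_le (by norm_cast)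
  obtain ⟨T, hT, hex⟩ := exists_pos_forall_ne_zero_exists_isHamiltonSolution hσ ha₂ hhom
  choose! χ hχ using hex
  refine ⟨T, hT, fun t p => χ p t, hχ, fun p hp y hy => (hy.eqOn ha₂ hT (hχ p hp)), ?_⟩
  intro l hl p hp
  exact (hχ _ (scaleA_ne_zero hl hp)).eqOn ha₂ hT
    ((hχ p hp).scaleA (ha₂.differentiableOn two_ne_zero) hhom hl)
end
end
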